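/- For any finite simple graph G with n vertices and m edges, the first Zagreb coindex satisfies \overline{M_1}(G) = 2m(n-1) - M_1(G), where M_1(G) = \sum_{v} d(v)^2 and \overline{M_1}(G) = \sum_{uv \notin E(G), u \neq v} (d(u) + d(v)). -/

import Mathlib

open scoped Classical
open Finset

noncomputable section

namespace Zagreb

variable {V : Type*}

/-- First Zagreb index. -/
def M1 (G : SimpleGraph V) [Fintype V] : ℕ :=
  ∑ v, (G.degree v) ^ 2

/-- Second Zagreb index. -/
def M2 (G : SimpleGraph V) [Fintype V] : ℕ :=
  ∑ e ∈ G.edgeFinset,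
    Sym2.lift ⟨fun u v => G.degree u * G.degree v, fun _ _ => mul_comm _ _⟩ e

/-- First Zagreb coindex: sum over unordered pairs of distinct non-adjacent vertices. -/
def M1bar (G : SimpleGraph V) [Fintype V] : ℕ :=
  ∑ e ∈ Gᶜ.edgeFinset,
    Sym2.lift ⟨fun u v => G.degree u + G.degree v, fun _ _ => add_comm _ _⟩ e

/-- Second Zagreb coindex. -/
def M2bar (G : SimpleGraph V) [Fintype V] : ℕ :=
  ∑ e ∈ Gᶜ.edgeFinset,
    Sym2.lift ⟨fun u v => G.degree u * G.degree v, fun _ _ => mul_comm _ _⟩ e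

/-- The cycle-star graph: a cycle of length `k` together with `l` leaves
attached to the cycle vertex `0`. -/
def cycleStar (k l : ℕ) : SimpleGraph (Fin k ⊕ Fin l) where
  Adj x y :=
    match x, y with
    | Sum.inl i, Sum.inl j => i ≠ j ∧ ((i.val + 1) % k = j.val ∨ (j.val + 1) % k = i.val)
    | Sum.inl i, Sum.inr _ => i.val = 0
    | Sum.inr _, Sum.inl i => i.val = 0
    | Sum.inr _, Sum.inr _ => False
  symm := by
    refine ⟨?_⟩
    rintro (i | a) (j | b) h
    · exact ⟨Ne.symm h.1, h.2.symm⟩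
    · exact h
    · exact h
    · exact h
  loopless := by
    refine ⟨?_⟩
    rintro (i | a) h
    · exact h.1 rfl
    · exact h

/-- The subdivision graph: each edge is replaced by a path of length 2. -/
def subdivision (G : SimpleGraph V) : SimpleGraph (V ⊕ G.edgeSet) where
  Adj x y :=
    match x, y with
    | Sum.inl v, Sum.inr e => v ∈ (e : Sym2 V)
    | Sum.inr e, Sum.inl v => v ∈ (e : Sym2 V)
    | _, _ => False
  symm := by refine ⟨?_⟩; rintro (v | e) (w | f) h <;> simp_all
  loopless := by refine ⟨?_⟩; rintro (v | e) h <;> simp_all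

/-- The line graph of `G`. -/
def lineGraph (G : SimpleGraph V) : SimpleGraph G.edgeSet where
  Adj e f := e ≠ f ∧ ∃ v, v ∈ (e : Sym2 V) ∧ v ∈ (f : Sym2 V)
  symm := by
    refine ⟨?_⟩
    rintro e f ⟨hne, v, hv1, hv2⟩
    exact ⟨hne.symm, v, hv2, hv1⟩
  loopless := by refine ⟨?_⟩; rintro e ⟨hne, _⟩; exact hne rfl

/-- A cut-vertex: a vertex of a connected graph whose removal disconnects it. -/
def IsCutVertex (G : SimpleGraph V) (v : V) : Prop :=
  G.Connected ∧ ¬ (G.induce {u | u ≠ v}).Connected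

/-- The line cut-vertex graph of `G`: vertices are the edges and cut-vertices of `G`;
two vertices are adjacent iff the corresponding edges share an endpoint, or one is
an edge incident to the other, a cut-vertex. -/
def lineCutGraph (G : SimpleGraph V) :
    SimpleGraph (G.edgeSet ⊕ {v : V // IsCutVertex G v}) where
  Adj x y :=
    match x, y with
    | Sum.inl e, Sum.inl f => e ≠ f ∧ ∃ v, v ∈ (e : Sym2 V) ∧ v ∈ (f : Sym2 V)
    | Sum.inl e, Sum.inr c => (c : V) ∈ (e : Sym2 V)
    | Sum.inr c, Sum.inl e => (c : V) ∈ (e : Sym2 V)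
    | Sum.inr _, Sum.inr _ => False
  symm := by
    refine ⟨?_⟩
    rintro (e | c) (f | d) h
    · exact ⟨Ne.symm h.1, h.2.choose, h.2.choose_spec.2, h.2.choose_spec.1⟩
    · exact h
    · exact h
    · exact h
  loopless := by
    refine ⟨?_⟩
    rintro (e | c) h
    · exact h.1 rfl
    · exact h

end Zagreb

/-! Summing `d(u) + d(v)` over the edges of `Gᶜ` counts each `d(v)` once per non-neighbour of `v`,
that is `n - 1 - d(v)` times. Hence `M̄₁(G) = ∑ᵥ (n - 1 - d(v)) d(v) = (n - 1) ∑ᵥ d(v) - M₁(G)`,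
and the handshake lemma `∑ᵥ d(v) = 2m` finishes. -/

namespace SimpleGraph

variable {V M : Type*} [Fintype V] [DecidableEq V] [AddCommMonoid M]

lemma sym2_lift_add_eq_sum_ite_mem (f : V → M) {e : Sym2 V} (he : ¬e.IsDiag) :
    Sym2.lift ⟨fun u v => f u + f v, fun _ _ => add_comm _ _⟩ e
      = ∑ w, if w ∈ e then f w else 0 := by
  induction e with
  | _ u v =>
    have huv : u ≠ v := he
    rw [← Finset.sum_filter, show ({w | w ∈ s(u, v)} : Finset V) = {u, v} by ext; simp,
      Finset.sum_pair huv, Sym2.lift_mk]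

theorem sum_edgeFinset_sym2_lift_add (H : SimpleGraph V) [DecidableRel H.Adj] (f : V → M) :
    ∑ e ∈ H.edgeFinset, Sym2.lift ⟨fun u v => f u + f v, fun _ _ => add_comm _ _⟩ e
      = ∑ v, H.degree v • f v := by
  calc ∑ e ∈ H.edgeFinset, Sym2.lift ⟨fun u v => f u + f v, fun _ _ => add_comm _ _⟩ e
      = ∑ e ∈ H.edgeFinset, ∑ w, if w ∈ e then f w else 0 :=
        Finset.sum_congr rfl fun e he =>
          sym2_lift_add_eq_sum_ite_mem f (H.not_isDiag_of_mem_edgeSet (mem_edgeFinset.mp he))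
    _ = ∑ w, ∑ e ∈ H.incidenceFinset w, f w := by
        rw [Finset.sum_comm]
        simp only [incidenceFinset_eq_filter, Finset.sum_filter]
    _ = ∑ v, H.degree v • f v := by
        simp only [Finset.sum_const, card_incidenceFinset_eq_degree]

end SimpleGraph

namespace Zagreb

variable {V : Type*} [Fintype V]

lemma M1bar_eq_sum_degree_compl_mul_degree (G : SimpleGraph V) :
    M1bar G = ∑ v, Gᶜ.degree v * G.degree v := by
  simp only [M1bar, SimpleGraph.sum_edgeFinset_sym2_lift_add, smul_eq_mul]

lemma degree_compl_intCast (G : SimpleGraph V) (v : V) :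
    (Gᶜ.degree v : ℤ) = Fintype.card V - 1 - G.degree v := by
  have hlt := G.degree_lt_card_verts v
  rw [G.degree_compl v]
  omega

end Zagreb

open Zagreb in
theorem stmt0 {V : Type*} [Fintype V] (G : SimpleGraph V) :
    (M1bar G : ℤ) =
      2 * (G.edgeFinset.card : ℤ) * ((Fintype.card V : ℤ) - 1) - (M1 G : ℤ) := by
  have handshake : ∑ v, (G.degree v : ℤ) = 2 * G.edgeFinset.card := by
    exact_mod_cast G.sum_degrees_eq_twice_card_edges
  rw [M1bar_eq_sum_degree_compl_mul_degree, M1]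
  push_cast
  rw [← handshake, Finset.sum_mul, ← Finset.sum_sub_distrib]
  exact Finset.sum_congr rfl fun v _ => by rw [degree_compl_intCast]; ring
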